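/- arXiv:2506.06582 — 4 statements merged into one kernel-verified Lean document; each statement's English description precedes it below -/
import Mathlib

section
/- For natural numbers r ≥ m and any q with 0 ≤ q ≤ m, the binomial coefficient satisfies C(r+m, r+q) ≤ (1 + m/(m+1))^{r-m} · (1+m)^m · C(m, q). -/
lemma aux_choose_le : ∀ (k n : ℕ), (n + k).choose k ≤ (n + 1) ^ k := by
  intro k
  induction k with
  | zero => simp
  | succ k ih =>
    intro n
    have key : (n + (k+1)).choose (k+1) * (k+1) = (n + k + 1) * (n + k).choose k := by
      exact (Nat.add_one_mul_choose_eq (n + k) k).symm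
    have h2 : (n + k + 1) * (n + k).choose k ≤ ((n + 1) * (n + 1) ^ k) * (k + 1) := by
      calc (n + k + 1) * (n + k).choose k ≤ ((k + 1) * (n + 1)) * (n + k).choose k := by
            apply Nat.mul_le_mul_right; nlinarith
        _ ≤ ((k + 1) * (n + 1)) * (n + 1) ^ k := by
            apply Nat.mul_le_mul_left; exact ih n
        _ = ((n + 1) * (n + 1) ^ k) * (k + 1) := by ring
    have h3 : (n + (k+1)).choose (k+1) * (k+1) ≤ ((n + 1) * (n + 1) ^ k) * (k + 1) := by
      omega
    have := Nat.le_of_mul_le_mul_right h3 (Nat.succ_pos k)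
    simpa [pow_succ, mul_comm] using this

/-- Binomial coefficient bound:
`C(r+m, r+q) ≤ (1 + m/(m+1))^(r-m) * (1+m)^m * C(m, q)` for `m ≤ r`, `q ≤ m`. -/
theorem stmt_2 (r m q : ℕ) (hmr : m ≤ r) (hqm : q ≤ m) :
    ((r + m).choose (r + q) : ℝ) ≤
      (1 + (m : ℝ) / (m + 1)) ^ (r - m) * ((1 : ℝ) + m) ^ m * (m.choose q : ℝ) := by
  induction r, hmr using Nat.le_induction with
  | base =>
    simp only [Nat.sub_self, pow_zero, one_mul]
    have h1 : (m + m).choose (m + q) ≤ (m + m).choose ((m + m) / 2) :=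
      Nat.choose_le_middle (m + q) (m + m)
    have h2 : (m + m) / 2 = m := by omega
    rw [h2] at h1
    have h3 : (m + m).choose m ≤ (m + 1) ^ m := aux_choose_le m m
    have h4 : 1 ≤ m.choose q := Nat.choose_pos hqm
    have : ((m + m).choose (m + q) : ℝ) ≤ ((m + 1 : ℕ) : ℝ) ^ m := by
      exact_mod_cast le_trans h1 h3
    calc ((m + m).choose (m + q) : ℝ) ≤ ((m + 1 : ℕ) : ℝ) ^ m * 1 := by
          rw [mul_one]; exact this
      _ ≤ ((1 : ℝ) + m) ^ m * (m.choose q : ℝ) := by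
          apply mul_le_mul
          · apply le_of_eq; push_cast; ring_nf
          · exact_mod_cast h4
          · norm_num
          · positivity
  | succ r hr ih =>
    have key : (r + 1 + m).choose (r + 1 + q) * (r + q + 1) =
        (r + m + 1) * (r + m).choose (r + q) := by
      have := Nat.add_one_mul_choose_eq (r + m) (r + q)
      have e1 : r + 1 + m = r + m + 1 := by omega
      have e2 : r + 1 + q = r + q + 1 := by omega
      rw [e1, e2]; exact (Nat.add_one_mul_choose_eq (r + m) (r + q)).symm
    have keyR : ((r + 1 + m).choose (r + 1 + q) : ℝ) * (r + q + 1) =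
        (r + m + 1) * ((r + m).choose (r + q) : ℝ) := by exact_mod_cast key
    have hq1 : (0:ℝ) < (r:ℝ) + q + 1 := by positivity
    have hLHS : ((r + 1 + m).choose (r + 1 + q) : ℝ) =
        ((r + m + 1) / (r + q + 1)) * ((r + m).choose (r + q) : ℝ) := by
      field_simp
      linarith [keyR]
    have hratio : ((r:ℝ) + m + 1) / (r + q + 1) ≤ 1 + (m : ℝ) / (m + 1) := by
      rw [div_le_iff₀ hq1]
      have hm1 : (0:ℝ) < (m:ℝ) + 1 := by positivity
      have hrm : (m:ℝ) ≤ r := by exact_mod_cast hr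
      have hq0 : (0:ℝ) ≤ q := by positivity
      have expand : (1 + (m : ℝ) / (m + 1)) * ((r:ℝ) + q + 1) - ((r:ℝ) + m + 1)
          = (m * (r + q + 1) - m * (m + 1) + q * (m+1)) / (m + 1) := by
        field_simp; ring
      have hnum : (0:ℝ) ≤ (m:ℝ) * (r + q + 1) - m * (m + 1) + q * (m+1) := by
        nlinarith [mul_le_mul_of_nonneg_left hrm (Nat.cast_nonneg m),
          mul_nonneg (Nat.cast_nonneg m) hq0, mul_nonneg hq0 hm1.le]
      have hdiv : (0:ℝ) ≤ ((m:ℝ) * (r + q + 1) - m * (m + 1) + q * (m+1)) / (m+1) :=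
        div_nonneg hnum hm1.le
      linarith [expand, hdiv]
    have hsub : r + 1 - m = (r - m) + 1 := by omega
    rw [hsub, hLHS, pow_succ]
    have hfac : (0:ℝ) ≤ (1 + (m : ℝ) / (m + 1)) := by positivity
    calc ((r + m + 1 : ℝ) / (r + q + 1)) * ((r + m).choose (r + q) : ℝ)
        ≤ (1 + (m : ℝ) / (m + 1)) * ((1 + (m : ℝ) / (m + 1)) ^ (r - m) * ((1 : ℝ) + m) ^ m * (m.choose q : ℝ)) := by
          apply mul_le_mul hratio ih (Nat.cast_nonneg _)
          positivity
      _ = (1 + (m : ℝ) / (m + 1)) ^ (r - m) * (1 + (m : ℝ) / (m + 1)) * ((1 : ℝ) + m) ^ m * (m.choose q : ℝ) := by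
          ring
end

section
/- Suppose Ã is a nonnegative n×n matrix, γ is its maximum row sum, B = γI + Ã, the distance from τ to σ in the support digraph of Ã is r, ω_{r+m}(σ,τ) denotes the number of directed paths from τ to σ of length at most r+m, and M is the maximum entry of Ã. Then for 0 ≤ m < r, (B^{r+m})_{σ,τ} ≤ 2^{r-m}(1+m)^m (γ+M)^m ω_{r+m}(σ,τ) M^r. -/
open scoped Classical


open scoped Classical

lemma powApplyEq {n : Type*} [Fintype n] [DecidableEq n] (A : Matrix n n ℝ) :
    ∀ (i : ℕ) (a b : n), (A ^ i) a b =
      ∑ v : Fin (i + 1) → n,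
        if v 0 = b ∧ v (Fin.last i) = a then
          ∏ j : Fin i, A (v j.succ) (v j.castSucc) else 0 := by
  intro i
  induction i with
  | zero =>
    intro a b
    rw [pow_zero, ← Equiv.sum_comp (Equiv.funUnique (Fin 1) n).symm]
    by_cases hab : a = b
    · subst hab; simp [Matrix.one_apply, uniqueElim]
    · rw [Matrix.one_apply, if_neg hab]
      symm
      apply Finset.sum_eq_zero
      intro x _
      rw [if_neg]
      simp only [Equiv.funUnique_symm_apply]
      rintro ⟨h1, h2⟩
      simp [uniqueElim] at h1 h2
      exact hab (h2.symm.trans h1)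
  | succ i ih =>
    intro a b
    rw [pow_succ, Matrix.mul_apply]
    rw [← Equiv.sum_comp (Fin.consEquiv fun _ : Fin (i + 2) => n), Fintype.sum_prod_type]
    have key : ∀ (x : n) (w : Fin (i + 1) → n),
        ((if (Fin.consEquiv fun _ : Fin (i + 2) => n) (x, w) 0 = b ∧
            (Fin.consEquiv fun _ : Fin (i + 2) => n) (x, w) (Fin.last (i + 1)) = a then
          ∏ j : Fin (i + 1), A ((Fin.consEquiv fun _ : Fin (i + 2) => n) (x, w) j.succ)
            ((Fin.consEquiv fun _ : Fin (i + 2) => n) (x, w) j.castSucc) else 0) : ℝ)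
        = if x = b then (if w (Fin.last i) = a then
            A (w 0) x * ∏ j : Fin i, A (w j.succ) (w j.castSucc) else 0) else 0 := by
      intro x w
      simp only [Fin.consEquiv_apply]
      rw [← ite_and]
      have hc : (((Fin.cons x w : Fin (i + 2) → n) 0 = b) ∧ ((Fin.cons x w : Fin (i + 2) → n) (Fin.last (i + 1)) = a))
          = ((x = b) ∧ (w (Fin.last i) = a)) := by
        rw [Fin.cons_zero, ← Fin.succ_last, Fin.cons_succ]
      have hp : (∏ j : Fin (i + 1), A ((Fin.cons x w : Fin (i + 2) → n) j.succ) ((Fin.cons x w : Fin (i + 2) → n) j.castSucc))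
          = A (w 0) x * ∏ j : Fin i, A (w j.succ) (w j.castSucc) := by
        rw [Fin.prod_univ_succ, Fin.castSucc_zero, Fin.cons_zero, Fin.cons_succ]
        exact congrArg _ (Finset.prod_congr rfl fun j _ => by
          rw [Fin.cons_succ, ← Fin.succ_castSucc, Fin.cons_succ])
      rw [hp]
      exact if_congr (iff_of_eq hc) rfl rfl
    calc (∑ x, (A ^ i) a x * A x b)
        = ∑ x, ∑ w : Fin (i + 1) → n,
            (if w 0 = x ∧ w (Fin.last i) = a then
              ∏ j : Fin i, A (w j.succ) (w j.castSucc) else 0) * A x b := by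
          refine Finset.sum_congr rfl fun x _ => ?_
          rw [ih a x, Finset.sum_mul]
      _ = ∑ w : Fin (i + 1) → n, ∑ x,
            if x = w 0 then (if w (Fin.last i) = a then
              A (w 0) b * ∏ j : Fin i, A (w j.succ) (w j.castSucc) else 0) else 0 := by
          rw [Finset.sum_comm]
          refine Finset.sum_congr rfl fun w _ => Finset.sum_congr rfl fun x _ => ?_
          by_cases hx : x = w 0
          · subst hx
            simp only [if_pos rfl, true_and, ite_mul, zero_mul]
            by_cases hl : w (Fin.last i) = a
            · simp [hl, mul_comm]
            · simp [hl]
          · rw [if_neg hx, if_neg, zero_mul]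
            rintro ⟨h1, _⟩; exact hx h1.symm
      _ = ∑ w : Fin (i + 1) → n,
            (if w (Fin.last i) = a then
              A (w 0) b * ∏ j : Fin i, A (w j.succ) (w j.castSucc) else 0) := by
          refine Finset.sum_congr rfl fun w _ => ?_
          rw [Finset.sum_ite_eq' Finset.univ (w 0)]
          simp
      _ = ∑ x, ∑ w : Fin (i + 1) → n,
            if x = b then (if w (Fin.last i) = a then
              A (w 0) x * ∏ j : Fin i, A (w j.succ) (w j.castSucc) else 0) else 0 := by
          rw [Finset.sum_comm]
          refine Finset.sum_congr rfl fun w _ => ?_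
          rw [Finset.sum_ite_eq' Finset.univ b]
          simp
      _ = _ := by
          refine Finset.sum_congr rfl fun x _ => Finset.sum_congr rfl fun w _ => ?_
          exact (key x w).symm

open scoped Classical

lemma chooseMonoHalf {N k m : ℕ} (hk : k ≤ m) (hm : 2 * m ≤ N) :
    N.choose k ≤ N.choose m := by
  induction m with
  | zero => simp [Nat.le_zero.mp hk]
  | succ p ih =>
    rcases Nat.lt_or_ge k (p + 1) with h | h
    · have h1 : N.choose k ≤ N.choose p := ih (Nat.lt_succ_iff.mp h) (by omega)
      refine h1.trans (Nat.choose_le_succ_of_lt_half_left ?_)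
      have : p + 1 ≤ N / 2 := (Nat.le_div_iff_mul_le (by norm_num)).2 (by omega)
      omega
    · have : k = p + 1 := le_antisymm hk h
      simp [this]

lemma fourPowLe (m : ℕ) : 4 ^ m ≤ 2 * (m + 1) ^ m := by
  match m with
  | 0 => norm_num
  | 1 => norm_num
  | 2 => norm_num
  | (k + 3) =>
    calc 4 ^ (k + 3) ≤ (k + 4) ^ (k + 3) := Nat.pow_le_pow_left (by omega) _
      _ ≤ 2 * (k + 4) ^ (k + 3) := Nat.le_mul_of_pos_left _ (by norm_num)

lemma chooseBound {m r : ℕ} (h : m < r) : (r + m).choose m ≤ 2 ^ (r - m) * (m + 1) ^ m := by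
  induction r, h using Nat.le_induction with
  | base =>
    have h1 : m + 1 + m = 2 * m + 1 := by omega
    have h2 : m + 1 - m = 1 := by omega
    rw [h1, h2, pow_one]
    exact (Nat.choose_middle_le_pow m).trans (fourPowLe m)
  | succ r hr ih =>
    match m, hr, ih with
    | 0, _, _ => simpa using Nat.one_le_two_pow
    | (k + 1), hr, ih =>
      have h1 : r + 1 + (k + 1) = (r + (k + 1)) + 1 := by omega
      rw [h1, Nat.choose_succ_succ']
      have h2 : (r + (k + 1)).choose k ≤ (r + (k + 1)).choose (k + 1) :=
        chooseMonoHalf (Nat.le_succ k) (by omega)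
      have h3 : (r + (k + 1)).choose k + (r + (k + 1)).choose (k + 1)
          ≤ 2 * (2 ^ (r - (k + 1)) * (k + 1 + 1) ^ (k + 1)) := by
        have := ih
        omega
      refine h3.trans ?_
      have h4 : r + 1 - (k + 1) = (r - (k + 1)) + 1 := by omega
      rw [h4, pow_succ]
      ring_nf
      omega

lemma powApplyLe {n : Type*} [Fintype n] [DecidableEq n] (A : Matrix n n ℝ)
    (hA : ∀ a b, 0 ≤ A a b) (M : ℝ) (hMle : ∀ a b, A a b ≤ M) (hM0 : 0 ≤ M)
    (i : ℕ) (a b : n) :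
    (A ^ i) a b ≤ ((Finset.univ.filter fun v : Fin (i + 1) → n =>
        v 0 = b ∧ v (Fin.last i) = a ∧
        ∀ j : Fin i, 0 < A (v j.succ) (v j.castSucc)).card : ℝ) * M ^ i := by
  rw [powApplyEq A i a b]
  have step : ∀ v : Fin (i + 1) → n,
      (if v 0 = b ∧ v (Fin.last i) = a then
        ∏ j : Fin i, A (v j.succ) (v j.castSucc) else 0)
      ≤ (if v 0 = b ∧ v (Fin.last i) = a ∧
          (∀ j : Fin i, 0 < A (v j.succ) (v j.castSucc)) then M ^ i else (0 : ℝ)) := by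
    intro v
    by_cases h1 : v 0 = b ∧ v (Fin.last i) = a
    · rw [if_pos h1]
      by_cases h2 : ∀ j : Fin i, 0 < A (v j.succ) (v j.castSucc)
      · rw [if_pos ⟨h1.1, h1.2, h2⟩]
        calc (∏ j : Fin i, A (v j.succ) (v j.castSucc))
            ≤ ∏ _j : Fin i, M := Finset.prod_le_prod
              (fun j _ => hA _ _) (fun j _ => hMle _ _)
          _ = M ^ i := by rw [Finset.prod_const, Finset.card_univ, Fintype.card_fin]
      · push_neg at h2
        obtain ⟨j, hj⟩ := h2
        have hz : A (v j.succ) (v j.castSucc) = 0 := le_antisymm hj (hA _ _)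
        rw [Finset.prod_eq_zero (Finset.mem_univ j) hz]
        split
        · exact pow_nonneg hM0 i
        · exact le_refl 0
    · rw [if_neg h1, if_neg (by tauto)]
  refine (Finset.sum_le_sum fun v _ => step v).trans ?_
  rw [← Finset.sum_filter, Finset.sum_const, nsmul_eq_mul]


/-- Depth bound: if `γ` is the maximum row sum of the nonnegative matrix `Ã`,
`M` its maximum entry, the combinatorial distance from `τ` to `σ` in the support
digraph of `Ã` is `r`, and `ω` is the number of directed paths of length at most
`r+m` from `τ` to `σ`, then for `0 ≤ m < r`,
`(B^(r+m))_{σ,τ} ≤ 2^(r-m) * (1+m)^m * (γ+M)^m * ω * M^r` where `B = γ•I + Ã`. -/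
theorem stmt_4 {n : Type*} [Fintype n] [DecidableEq n]
    (A : Matrix n n ℝ) (hA : ∀ a b, 0 ≤ A a b)
    (γ : ℝ) (hγ : IsGreatest (Set.range fun a => ∑ b, A a b) γ)
    (M : ℝ) (hM : IsGreatest (Set.range fun p : n × n => A p.1 p.2) M)
    (σ τ : n) (r m : ℕ) (hm : m < r)
    (hdist : ∀ i < r, (A ^ i) σ τ = 0) (hr : 0 < (A ^ r) σ τ)
    (ω : ℕ)
    (hω : ω = ∑ i ∈ Finset.range (r + m + 1),
        (Finset.univ.filter fun v : Fin (i + 1) → n =>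
          v 0 = τ ∧ v (Fin.last i) = σ ∧
          ∀ j : Fin i, 0 < A (v j.succ) (v j.castSucc)).card) :
    ((γ • (1 : Matrix n n ℝ) + A) ^ (r + m)) σ τ ≤
      2 ^ (r - m) * ((1 : ℝ) + m) ^ m * (γ + M) ^ m * ω * M ^ r := by
  have hγ0 : 0 ≤ γ := by
    obtain ⟨a, ha⟩ := hγ.1
    rw [← ha]; exact Finset.sum_nonneg fun b _ => hA a b
  have hM0 : 0 ≤ M := by
    obtain ⟨p, hp⟩ := hM.1
    rw [← hp]; exact hA p.1 p.2
  have hMle : ∀ a b, A a b ≤ M := fun a b => hM.2 ⟨(a, b), rfl⟩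
  have hcomm : Commute (γ • (1 : Matrix n n ℝ)) A := (Commute.one_left A).smul_left γ
  rw [hcomm.add_pow, Matrix.sum_apply]
  have hterm : ∀ k : ℕ, ((γ • (1 : Matrix n n ℝ)) ^ k * A ^ (r + m - k) *
      (((r + m).choose k : ℕ) : Matrix n n ℝ)) σ τ
      = ((r + m).choose k : ℝ) * γ ^ k * (A ^ (r + m - k)) σ τ := by
    intro k
    rw [← Matrix.diagonal_natCast, Matrix.mul_diagonal, smul_pow, one_pow,
      Matrix.smul_mul, one_mul, Matrix.smul_apply, smul_eq_mul]
    ring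
  refine le_trans (le_of_eq (Finset.sum_congr rfl fun k _ => hterm k)) ?_
  have hzero : ∀ k ∈ Finset.range (r + m + 1), k ∉ Finset.range (m + 1) →
      ((r + m).choose k : ℝ) * γ ^ k * (A ^ (r + m - k)) σ τ = 0 := by
    intro k hk1 hk2
    simp only [Finset.mem_range] at hk1 hk2
    rw [hdist (r + m - k) (by clear hω; omega), mul_zero]
  rw [← Finset.sum_subset (Finset.range_subset_range.mpr (by clear hω; omega : m + 1 ≤ r + m + 1)) hzero]
  have hcω : ∀ i, i ≤ r + m →
      (Finset.univ.filter fun v : Fin (i + 1) → n =>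
          v 0 = τ ∧ v (Fin.last i) = σ ∧
          ∀ j : Fin i, 0 < A (v j.succ) (v j.castSucc)).card ≤ ω := by
    intro i hi
    rw [hω]
    exact Finset.single_le_sum (f := fun i => (Finset.univ.filter fun v : Fin (i + 1) → n =>
          v 0 = τ ∧ v (Fin.last i) = σ ∧
          ∀ j : Fin i, 0 < A (v j.succ) (v j.castSucc)).card)
      (fun _ _ => Nat.zero_le _) (Finset.mem_range.mpr (by clear hω; omega))
  have hkle : ∀ k ∈ Finset.range (m + 1),
      ((r + m).choose k : ℝ) * γ ^ k * (A ^ (r + m - k)) σ τ ≤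
      (((r + m).choose m : ℝ) * ((m.choose k : ℝ) * (γ ^ k * M ^ (m - k)))) * ((ω : ℝ) * M ^ r) := by
    intro k hk
    have hkm : k ≤ m := by simpa [Nat.lt_succ_iff] using Finset.mem_range.mp hk
    have h1 : (A ^ (r + m - k)) σ τ ≤
        ((Finset.univ.filter fun v : Fin ((r + m - k) + 1) → n =>
          v 0 = τ ∧ v (Fin.last (r + m - k)) = σ ∧
          ∀ j : Fin (r + m - k), 0 < A (v j.succ) (v j.castSucc)).card : ℝ) * M ^ (r + m - k) :=
      powApplyLe A hA M hMle hM0 _ σ τ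
    have h3 : (A ^ (r + m - k)) σ τ ≤ (ω : ℝ) * M ^ (r + m - k) :=
      h1.trans (mul_le_mul_of_nonneg_right (Nat.cast_le.mpr (hcω _ (by clear hω; omega)))
        (pow_nonneg hM0 _))
    have h4 : ((r + m).choose k : ℝ) ≤ ((r + m).choose m : ℝ) * (m.choose k : ℝ) := by
      rw [← Nat.cast_mul]
      exact_mod_cast Nat.le_trans (chooseMonoHalf hkm (by clear hω; omega))
        (Nat.le_mul_of_pos_right _ (Nat.choose_pos hkm))
    have h5 : M ^ (r + m - k) = M ^ (m - k) * M ^ r := by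
      rw [← pow_add]; congr 1; clear hω; omega
    calc ((r + m).choose k : ℝ) * γ ^ k * (A ^ (r + m - k)) σ τ
        ≤ ((r + m).choose k : ℝ) * γ ^ k * ((ω : ℝ) * M ^ (r + m - k)) := by
          refine mul_le_mul_of_nonneg_left h3 ?_
          have := Nat.cast_nonneg (α := ℝ) ((r + m).choose k)
          positivity
      _ = ((r + m).choose k : ℝ) * (γ ^ k * ((ω : ℝ) * M ^ (r + m - k))) := by ring
      _ ≤ (((r + m).choose m : ℝ) * (m.choose k : ℝ)) * (γ ^ k * ((ω : ℝ) * M ^ (r + m - k))) := by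
          refine mul_le_mul_of_nonneg_right h4 ?_
          positivity
      _ = (((r + m).choose m : ℝ) * ((m.choose k : ℝ) * (γ ^ k * M ^ (m - k)))) * ((ω : ℝ) * M ^ r) := by
          rw [h5]; ring
  refine (Finset.sum_le_sum hkle).trans ?_
  rw [← Finset.sum_mul, ← Finset.mul_sum]
  have hbin : (∑ k ∈ Finset.range (m + 1), (m.choose k : ℝ) * (γ ^ k * M ^ (m - k)))
      = (γ + M) ^ m := by
    rw [add_pow]
    exact Finset.sum_congr rfl fun k _ => by ring
  rw [hbin]
  have h6 : ((r + m).choose m : ℝ) ≤ 2 ^ (r - m) * (1 + (m : ℝ)) ^ m := by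
    calc ((r + m).choose m : ℝ) ≤ ((2 ^ (r - m) * (m + 1) ^ m : ℕ) : ℝ) :=
          Nat.cast_le.mpr (chooseBound hm)
      _ = 2 ^ (r - m) * (1 + (m : ℝ)) ^ m := by push_cast; ring
  have hγM : (0 : ℝ) ≤ (γ + M) ^ m := pow_nonneg (by linarith) m
  calc ((r + m).choose m : ℝ) * (γ + M) ^ m * ((ω : ℝ) * M ^ r)
      ≤ (2 ^ (r - m) * (1 + (m : ℝ)) ^ m) * (γ + M) ^ m * ((ω : ℝ) * M ^ r) := by
        refine mul_le_mul_of_nonneg_right (mul_le_mul_of_nonneg_right h6 hγM) ?_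
        positivity
    _ = 2 ^ (r - m) * ((1 : ℝ) + m) ^ m * (γ + M) ^ m * ω * M ^ r := by ring
end

section
/- Let f, g: ℝ → ℝ be differentiable with |f'| ≤ C_f and |g'| ≤ C_g, and let φ(m₁,…,m_k) = f∘(W·[g∘m₁; …; g∘m_k]) applied componentwise, where W has entries bounded in absolute value by C_w and output dimension p'. Then the induced 1-norm of the Jacobian of φ with respect to any input m_i is at most C_w · C_f · C_g · p'. -/
/-- For the update function `φ(m₁,…,m_k) = f∘(W·[g∘m₁; …; g∘m_k])` with
`|f'| ≤ C_f`, `|g'| ≤ C_g`, and entries of `W` bounded by `C_w`, the Jacobian of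
`φ` with respect to the input `m_i` is
`diag(f'(W·M)) · W^{(:,I_i)} · diag(g'(m_i))`, i.e. `(a,l) ↦ f'(u a) · W a (i,l) · g'(v l)`,
and its induced 1-norm (maximum absolute column sum) is at most `C_w C_f C_g p'`. -/
theorem stmt_8 {k q p' : ℕ} (f g : ℝ → ℝ)
    (hf : Differentiable ℝ f) (hg : Differentiable ℝ g)
    (Cf Cg Cw : ℝ) (hf' : ∀ x, |deriv f x| ≤ Cf) (hg' : ∀ x, |deriv g x| ≤ Cg)
    (W : Matrix (Fin p') (Fin k × Fin q) ℝ) (hW : ∀ a b, |W a b| ≤ Cw)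
    (i : Fin k) (u : Fin p' → ℝ) (v : Fin q → ℝ) :
    ∀ l : Fin q, ∑ a : Fin p', |deriv f (u a) * W a (i, l) * deriv g (v l)| ≤
      Cw * Cf * Cg * p' := by
  intro l
  rcases Nat.eq_zero_or_pos p' with h | h
  · subst h; simp
  have hCf : 0 ≤ Cf := le_trans (abs_nonneg _) (hf' 0)
  have hCg : 0 ≤ Cg := le_trans (abs_nonneg _) (hg' 0)
  have hCw : 0 ≤ Cw := le_trans (abs_nonneg _) (hW ⟨0, h⟩ (i, l))
  calc ∑ a : Fin p', |deriv f (u a) * W a (i, l) * deriv g (v l)|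
      ≤ ∑ _a : Fin p', Cw * Cf * Cg := by
        apply Finset.sum_le_sum
        intro a _
        rw [abs_mul, abs_mul]
        calc |deriv f (u a)| * |W a (i, l)| * |deriv g (v l)|
            ≤ Cf * Cw * Cg := by gcongr <;> [exact hf' _; exact hW _ _; exact hg' _]
          _ = Cw * Cf * Cg := by ring
    _ = Cw * Cf * Cg * p' := by simp [mul_comm]
end

section
/- Let Ã be a nonnegative n×n matrix whose every row sum is at most k (a natural number), so that γ = max row sum ≤ k and M = max entry of Ã ≤ k. If the combinatorial distance from τ to σ in the support digraph of Ã is r and 0 ≤ m < r, then (B^{r+m})_{σ,τ} ≤ (2k(1+m))^m · ω_{r+m}(σ,τ) · (2M)^r, where B = γI + Ã and ω_{r+m}(σ,τ) is the number of directed paths of length at most r+m from τ to σ. -/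
/-!
Expand `(γ • 1 + A) ^ (r + m) = ∑ j, (r + m).choose j * γ ^ (r + m - j) * A ^ j`. The terms with
`j < r` vanish at `(σ, τ)` because `σ` is at distance `r` from `τ`. For `j ≥ r`, every entry of
`A` is at most `M`, so `(A ^ j) σ τ` is at most `M ^ j` times the number of walks of length `j`
from `τ` to `σ`; together with `choose ≤ 2 ^ (r + m)`, `γ ≤ k` and `M ≤ k`, the `j`-th term is at
most `2 ^ (r + m) * k ^ m * M ^ r` times that walk count. Summing over `j` gives
`2 ^ (r + m) * k ^ m * M ^ r * ω`, and the extra factor `(1 + m) ^ m ≥ 1` only helps.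
-/

open scoped Classical
open Finset

section

variable {R : Type*} [CommSemiring R] [LinearOrder R] [IsStrictOrderedRing R]

theorem choose_mul_pow_mul_pow_le {γ M k : R} (hγ₀ : 0 ≤ γ) (hγk : γ ≤ k) (hM₀ : 0 ≤ M)
    (hMk : M ≤ k) {r m j : ℕ} (hrj : r ≤ j) (hjm : j ≤ r + m) :
    (r + m).choose j * γ ^ (r + m - j) * M ^ j ≤ 2 ^ (r + m) * k ^ m * M ^ r := by
  obtain ⟨q, rfl⟩ := Nat.exists_eq_add_of_le hrj
  have hk₀ : 0 ≤ k := hM₀.trans hMk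
  have hk_pow : k ^ (m - q) * k ^ q = k ^ m := by rw [← pow_add, Nat.sub_add_cancel (by omega)]
  calc (r + m).choose (r + q) * γ ^ (r + m - (r + q)) * M ^ (r + q)
      ≤ 2 ^ (r + m) * k ^ (m - q) * (M ^ r * k ^ q) := by
        rw [show r + m - (r + q) = m - q by omega, pow_add]
        gcongr
        exact_mod_cast Nat.choose_le_two_pow _ _
    _ = 2 ^ (r + m) * k ^ m * M ^ r := by
        rw [← hk_pow]
        ring

end

namespace Matrix

variable {n R : Type*} [Fintype n]

section Walks

variable [CommSemiring R] [PartialOrder R]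

-- An edge `b → a` of the support digraph is an entry `0 < A a b`.
noncomputable def supportWalks (A : Matrix n n R) (τ σ : n) (i : ℕ) : Finset (Fin (i + 1) → n) :=
  univ.filter fun v : Fin (i + 1) → n =>
    v 0 = τ ∧ v (Fin.last i) = σ ∧ ∀ j : Fin i, 0 < A (v j.succ) (v j.castSucc)

theorem sum_card_supportWalks_le (A : Matrix n n R) (τ σ : n) (i : ℕ) :
    ∑ b ∈ univ.filter (0 < A σ ·), #(supportWalks A τ b i) ≤
      #(supportWalks A τ σ (i + 1)) := by
  rw [← card_biUnion]
  · refine card_le_card_of_injOn (Fin.snoc · σ) ?_ fun v _ u _ h => (Fin.snoc_inj.mp h).1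
    intro v hv
    simp only [coe_biUnion, coe_filter, mem_univ, true_and, Set.mem_iUnion, supportWalks,
      Set.mem_ofPred_eq, exists_prop] at hv ⊢
    obtain ⟨b, hb, h0, rfl, hv⟩ := hv
    refine ⟨by simpa using h0, Fin.snoc_last _ _, Fin.lastCases ?_ fun j => ?_⟩
    · simpa using hb
    · rw [Fin.succ_castSucc, Fin.snoc_castSucc, Fin.snoc_castSucc]
      exact hv j
  · intro b _ c _ hbc
    refine disjoint_left.mpr fun v hb hc => hbc ?_
    simp only [supportWalks, mem_filter] at hb hc
    exact hb.2.2.1.symm.trans hc.2.2.1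

theorem pow_apply_le_card_supportWalks_mul [IsOrderedRing R] [DecidableEq n] {A : Matrix n n R}
    (hA : ∀ a b, 0 ≤ A a b) {M : R} (hM : ∀ a b, A a b ≤ M) (τ : n) (i : ℕ) (σ : n) :
    (A ^ i) σ τ ≤ #(supportWalks A τ σ i) * M ^ i := by
  have hM₀ : 0 ≤ M := (hA τ τ).trans (hM τ τ)
  induction i generalizing σ with
  | zero =>
    rw [pow_zero, pow_zero, mul_one, one_apply]
    split_ifs with h
    · have : (fun _ => τ) ∈ supportWalks A τ σ 0 := by simp [supportWalks, h]
      simpa using Nat.mono_cast (α := R) (card_pos.mpr ⟨_, this⟩)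
    · positivity
  | succ i ih =>
    have h_supp : ∀ b ∈ univ, A σ b * (A ^ i) b τ ≠ 0 → 0 < A σ b := fun b _ h =>
      (hA σ b).lt_of_ne (left_ne_zero_of_mul h).symm
    calc (A ^ (i + 1)) σ τ
        = ∑ b ∈ univ.filter (0 < A σ ·), A σ b * (A ^ i) b τ := by
          rw [pow_succ', mul_apply, sum_filter_of_ne h_supp]
      _ ≤ ∑ b ∈ univ.filter (0 < A σ ·), M * (#(supportWalks A τ b i) * M ^ i) :=
          sum_le_sum fun b _ => mul_le_mul (hM σ b) (ih b) (pow_apply_nonneg hA i b τ) hM₀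
      _ = (∑ b ∈ univ.filter (0 < A σ ·), #(supportWalks A τ b i) : ℕ) * M ^ (i + 1) := by
          rw [Nat.cast_sum, sum_mul]
          exact sum_congr rfl fun b _ => by ring
      _ ≤ #(supportWalks A τ σ (i + 1)) * M ^ (i + 1) := by
          gcongr
          exact sum_card_supportWalks_le A τ σ i

end Walks

theorem smul_one_add_pow_apply [DecidableEq n] [CommSemiring R] (c : R) (A : Matrix n n R)
    (N : ℕ) (i j : n) :
    ((c • 1 + A) ^ N) i j = ∑ l ∈ range (N + 1), N.choose l * c ^ (N - l) * (A ^ l) i j := by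
  rw [add_comm, ((Commute.one_right A).smul_right c).add_pow, sum_apply]
  refine sum_congr rfl fun l _ => ?_
  rw [smul_pow, one_pow, mul_smul_comm, mul_one, ← nsmul_eq_mul', smul_apply, smul_apply,
    nsmul_eq_mul, smul_eq_mul]
  ring

theorem smul_one_add_pow_apply_le [DecidableEq n] [CommSemiring R] [LinearOrder R]
    [IsStrictOrderedRing R] {A : Matrix n n R} (hA : ∀ a b, 0 ≤ A a b) {γ M k : R}
    (hM : ∀ a b, A a b ≤ M) (hγ₀ : 0 ≤ γ) (hγk : γ ≤ k) (hMk : M ≤ k) {σ τ : n} {r : ℕ}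
    (hdist : ∀ i < r, (A ^ i) σ τ = 0) (m : ℕ) :
    ((γ • 1 + A) ^ (r + m)) σ τ ≤
      2 ^ (r + m) * k ^ m * M ^ r * ∑ j ∈ range (r + m + 1), #(supportWalks A τ σ j) := by
  have hM₀ : 0 ≤ M := (hA σ σ).trans (hM σ σ)
  have hk₀ : 0 ≤ k := hM₀.trans hMk
  rw [smul_one_add_pow_apply, Nat.cast_sum, mul_sum]
  refine sum_le_sum fun j hj => ?_
  rcases lt_or_ge j r with hjr | hrj
  · rw [hdist j hjr, mul_zero]
    positivity
  have hjm : j ≤ r + m := Nat.lt_succ_iff.mp (mem_range.mp hj)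
  calc (r + m).choose j * γ ^ (r + m - j) * (A ^ j) σ τ
      ≤ (r + m).choose j * γ ^ (r + m - j) * (#(supportWalks A τ σ j) * M ^ j) := by
        gcongr
        exact pow_apply_le_card_supportWalks_mul hA hM τ j σ
    _ = (r + m).choose j * γ ^ (r + m - j) * M ^ j * #(supportWalks A τ σ j) := by ring
    _ ≤ 2 ^ (r + m) * k ^ m * M ^ r * #(supportWalks A τ σ j) := by
        gcongr ?_ * _
        exact choose_mul_pow_mul_pow_le hγ₀ hγk hM₀ hMk hrj hjm

end Matrix

theorem stmt_15_general {n : Type*} [Fintype n] [DecidableEq n]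
    (A : Matrix n n ℝ) (hA : ∀ a b, 0 ≤ A a b)
    (k : ℕ) (hk : ∀ a, ∑ b, A a b ≤ k)
    (γ : ℝ) (hγ : IsGreatest (Set.range fun a => ∑ b, A a b) γ)
    (M : ℝ) (hM : IsGreatest (Set.range fun p : n × n => A p.1 p.2) M)
    (σ τ : n) (r m : ℕ)
    (hdist : ∀ i < r, (A ^ i) σ τ = 0)
    (ω : ℕ)
    (hω : ω = ∑ i ∈ Finset.range (r + m + 1),
        (Finset.univ.filter fun v : Fin (i + 1) → n =>
          v 0 = τ ∧ v (Fin.last i) = σ ∧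
          ∀ j : Fin i, 0 < A (v j.succ) (v j.castSucc)).card) :
    ((γ • (1 : Matrix n n ℝ) + A) ^ (r + m)) σ τ ≤
      (2 * k * ((1 : ℝ) + m)) ^ m * ω * (2 * M) ^ r := by
  obtain ⟨a, ha⟩ := hγ.1
  obtain ⟨⟨a', b'⟩, hab⟩ := hM.1
  have hγ₀ : 0 ≤ γ := ha ▸ sum_nonneg fun b _ => hA a b
  have hγk : γ ≤ k := ha ▸ hk a
  have hM_le : ∀ a b, A a b ≤ M := fun a b => hM.2 ⟨(a, b), rfl⟩
  have hM₀ : 0 ≤ M := (hA a' b').trans (hM_le a' b')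
  have hMk : M ≤ k := hab ▸ (single_le_sum (fun b _ => hA a' b) (mem_univ b')).trans (hk a')
  have hω : ω = ∑ j ∈ range (r + m + 1), #(Matrix.supportWalks A τ σ j) :=
    hω.trans (sum_congr rfl fun j _ => by unfold Matrix.supportWalks; congr)
  calc ((γ • (1 : Matrix n n ℝ) + A) ^ (r + m)) σ τ
      ≤ 2 ^ (r + m) * k ^ m * M ^ r * ω := by
        rw [hω]
        exact Matrix.smul_one_add_pow_apply_le hA hM_le hγ₀ hγk hMk hdist m
    _ = (2 * k) ^ m * 1 * ω * (2 * M) ^ r := by ring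
    _ ≤ (2 * k) ^ m * (1 + m) ^ m * ω * (2 * M) ^ r := by
        gcongr
        exact one_le_pow₀ (by simp)
    _ = (2 * k * ((1 : ℝ) + m)) ^ m * ω * (2 * M) ^ r := by rw [mul_pow (2 * (k : ℝ))]

/-- Impact of depth: if every row sum of the nonnegative matrix `Ã` is at most
`k`, `γ` is its maximum row sum and `M` its maximum entry (so `γ ≤ k` and
`M ≤ k`), the combinatorial distance from `τ` to `σ` in the support digraph is
`r`, and `0 ≤ m < r`, then
`(B^(r+m))_{σ,τ} ≤ (2k(1+m))^m · ω_{r+m}(σ,τ) · (2M)^r` where `B = γ•I + Ã` and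
`ω_{r+m}(σ,τ)` counts directed paths of length at most `r+m` from `τ` to `σ`. -/
theorem stmt_15 {n : Type*} [Fintype n] [DecidableEq n]
    (A : Matrix n n ℝ) (hA : ∀ a b, 0 ≤ A a b)
    (k : ℕ) (hk : ∀ a, ∑ b, A a b ≤ k)
    (γ : ℝ) (hγ : IsGreatest (Set.range fun a => ∑ b, A a b) γ)
    (M : ℝ) (hM : IsGreatest (Set.range fun p : n × n => A p.1 p.2) M)
    (σ τ : n) (r m : ℕ) (hm : m < r)
    (hdist : ∀ i < r, (A ^ i) σ τ = 0) (hr : 0 < (A ^ r) σ τ)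
    (ω : ℕ)
    (hω : ω = ∑ i ∈ Finset.range (r + m + 1),
        (Finset.univ.filter fun v : Fin (i + 1) → n =>
          v 0 = τ ∧ v (Fin.last i) = σ ∧
          ∀ j : Fin i, 0 < A (v j.succ) (v j.castSucc)).card) :
    ((γ • (1 : Matrix n n ℝ) + A) ^ (r + m)) σ τ ≤
      (2 * k * ((1 : ℝ) + m)) ^ m * ω * (2 * M) ^ r :=
  stmt_15_general A hA k hk γ hγ M hM σ τ r m hdist ω hω
end
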